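/- arXiv:2412.06971 — 2 statements merged into one kernel-verified Lean document; each statement's English description precedes it below -/
import Mathlib

section
/- Let e1, e2, e3, e4 be distinct non-bridge edges of a connected graph Γ such that {e1,e2}, {e2,e3}, and {e3,e4} are each disconnecting pairs (removing both edges disconnects the graph but removing only one does not). Then {e4,e1} is also a disconnecting pair. -/
/-- A finite (multi)graph: finite vertex and edge types, each edge with an
unordered pair of endpoints. -/
structure FinMultigraph where
  V : Type
  E : Type
  [fintV : Fintype V]
  [fintE : Fintype E]
  ends : E → Sym2 V

namespace FinMultigraph

/-- Adjacency in the graph obtained by deleting the edges in `S`. -/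
def adjOff (G : FinMultigraph) (S : Set G.E) (u v : G.V) : Prop :=
  ∃ e : G.E, e ∉ S ∧ G.ends e = s(u, v)

/-- The graph with the edges in `S` deleted is connected. -/
def connOff (G : FinMultigraph) (S : Set G.E) : Prop :=
  ∀ u v : G.V, Relation.ReflTransGen (G.adjOff S) u v

/-- The graph is connected. -/
def Connected (G : FinMultigraph) : Prop := G.connOff ∅

/-- An edge is a bridge if its removal disconnects the graph. -/
def IsBridge (G : FinMultigraph) (e : G.E) : Prop := ¬ G.connOff {e}

/-- A pair of edges is a disconnecting pair if removing both disconnects the graph. -/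
def DiscPair (G : FinMultigraph) (e f : G.E) : Prop := ¬ G.connOff {e, f}

/-- Number of connected components after deleting the edges in `S`. -/
noncomputable def numComponentsOff (G : FinMultigraph) (S : Set G.E) : ℕ :=
  Nat.card (Quot (G.adjOff S))

end FinMultigraph

/-! Deleting a properly disconnecting pair `{e, f}` leaves exactly two components, and `e`, `f`
are the only edges between them: `{e, f}` is the cut of a 2-colouring of the vertices. Adding
colourings mod 2 shows that cuts are closed under symmetric difference, and
`{e₁, e₂} ∆ {e₂, e₃} ∆ {e₃, e₄} = {e₄, e₁}`. A nonempty cut disconnects the graph. -/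

namespace FinMultigraph

variable {G : FinMultigraph} {S : Set G.E}

open Relation

lemma adjOff_symm {u v : G.V} (h : G.adjOff S u v) : G.adjOff S v u :=
  let ⟨e, he, hends⟩ := h
  ⟨e, he, hends.trans Sym2.eq_swap⟩

lemma reflTransGen_adjOff_symm {u v : G.V}
    (h : ReflTransGen (G.adjOff S) u v) : ReflTransGen (G.adjOff S) v u :=
  haveI : Std.Symm (G.adjOff S) := ⟨fun _ _ => adjOff_symm⟩
  Std.Symm.symm _ _ h

lemma reflTransGen_adjOff_insert {g : G.E} {x y u v : G.V}
    (hg : G.ends g = s(x, y)) (hxy : ReflTransGen (G.adjOff (insert g S)) x y)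
    (h : ReflTransGen (G.adjOff S) u v) : ReflTransGen (G.adjOff (insert g S)) u v := by
  induction h with
  | refl => exact .refl
  | tail _ hstep ih =>
    obtain ⟨h, hh, hends⟩ := hstep
    by_cases hhg : h = g
    · subst hhg
      rcases Sym2.eq_iff.mp (hends.symm.trans hg) with ⟨rfl, rfl⟩ | ⟨rfl, rfl⟩
      · exact ih.trans hxy
      · exact ih.trans (reflTransGen_adjOff_symm hxy)
    · exact ih.tail ⟨h, by simp [hhg, hh], hends⟩

lemma reflTransGen_adjOff_insert_or {g : G.E} {x y w : G.V}
    (hg : G.ends g = s(x, y)) (h : ReflTransGen (G.adjOff S) x w) :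
    ReflTransGen (G.adjOff (insert g S)) x w ∨ ReflTransGen (G.adjOff (insert g S)) y w := by
  induction h with
  | refl => exact .inl .refl
  | tail _ hstep ih =>
    obtain ⟨h, hh, hends⟩ := hstep
    by_cases hhg : h = g
    · subst hhg
      rcases Sym2.eq_iff.mp (hends.symm.trans hg) with ⟨-, rfl⟩ | ⟨-, rfl⟩
      exacts [.inr .refl, .inl .refl]
    · have hstep : G.adjOff (insert g S) _ _ := ⟨h, by simp [hhg, hh], hends⟩
      exact ih.imp (·.tail hstep) (·.tail hstep)

/-- A bridge `g` of the connected graph `G - S` splits it into the component of `x` and that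
of `y`. -/
lemma not_reflTransGen_iff_of_not_connOff_insert {g : G.E} {x y : G.V}
    (hg : G.ends g = s(x, y)) (hS : G.connOff S) (hgS : ¬ G.connOff (insert g S)) (w : G.V) :
    ¬ (ReflTransGen (G.adjOff (insert g S)) x w ↔ ReflTransGen (G.adjOff (insert g S)) y w) := by
  have hxy : ¬ ReflTransGen (G.adjOff (insert g S)) x y :=
    fun hxy => hgS fun u v => reflTransGen_adjOff_insert hg hxy (hS u v)
  intro hiff
  rcases reflTransGen_adjOff_insert_or hg (hS x w) with hx | hy
  · exact hxy (hx.trans (reflTransGen_adjOff_symm (hiff.mp hx)))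
  · exact hxy ((hiff.mpr hy).trans (reflTransGen_adjOff_symm hy))

def IsCut (G : FinMultigraph) (χ : G.V → Bool) (S : Set G.E) : Prop :=
  ∀ g u v, G.ends g = s(u, v) → (g ∈ S ↔ χ u ≠ χ v)

lemma IsCut.eq_of_reflTransGen {χ : G.V → Bool} (hχ : G.IsCut χ S) {u v : G.V}
    (h : ReflTransGen (G.adjOff S) u v) : χ u = χ v := by
  induction h with
  | refl => rfl
  | tail _ hstep ih =>
    obtain ⟨g, hg, hends⟩ := hstep
    exact ih.trans (not_not.mp (mt (hχ g _ _ hends).mpr hg))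

lemma IsCut.not_connOff {χ : G.V → Bool} (hχ : G.IsCut χ S) {e : G.E}
    (he : e ∈ S) : ¬ G.connOff S := by
  obtain ⟨⟨u, v⟩, huv⟩ := Sym2.mk_surjective (G.ends e)
  exact fun hS => (hχ e u v huv.symm).mp he (hχ.eq_of_reflTransGen (hS u v))

open scoped symmDiff in
lemma IsCut.xor {χ ψ : G.V → Bool} {T : Set G.E} (hχ : G.IsCut χ S) (hψ : G.IsCut ψ T) :
    G.IsCut (fun v => χ v ^^ ψ v) (S ∆ T) := by
  intro g u v huv
  rw [Set.mem_symmDiff, hχ g u v huv, hψ g u v huv]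
  dsimp only
  cases χ u <;> cases χ v <;> cases ψ u <;> cases ψ v <;> decide

lemma exists_isCut_of_discPair {e f : G.E} (he : ¬ G.IsBridge e) (hf : ¬ G.IsBridge f)
    (hef : G.DiscPair e f) : ∃ χ : G.V → Bool, G.IsCut χ {e, f} := by
  classical
  rw [IsBridge, not_not] at he hf
  have hfe : ¬ G.connOff (insert f {e}) := by rwa [Set.pair_comm]
  obtain ⟨a, -⟩ := not_forall.mp hef
  refine ⟨fun v => decide (ReflTransGen (G.adjOff {e, f}) v a), fun g u v huv => ?_⟩
  simp only [ne_eq, decide_eq_decide]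
  constructor
  · rintro (rfl | rfl)
    · exact not_reflTransGen_iff_of_not_connOff_insert huv hf hef a
    · rw [Set.pair_comm]
      exact not_reflTransGen_iff_of_not_connOff_insert huv he hfe a
  · intro hcross
    by_contra hg
    exact hcross ⟨fun hu => (ReflTransGen.single (adjOff_symm ⟨g, hg, huv⟩)).trans hu,
      fun hv => (ReflTransGen.single ⟨g, hg, huv⟩).trans hv⟩

end FinMultigraph

open scoped symmDiff in
lemma Set.pair_symmDiff_pair_symmDiff_pair {α : Type*} {a b c d : α}
    (hab : a ≠ b) (hac : a ≠ c) (had : a ≠ d) (hbc : b ≠ c) (hbd : b ≠ d) (hcd : c ≠ d) :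
    ({a, b} ∆ {b, c} ∆ {c, d} : Set α) = {d, a} := by
  ext x
  simp only [Set.mem_symmDiff, Set.mem_insert_iff, Set.mem_singleton_iff]
  grind

theorem disconnecting_pair_transitive_general (G : FinMultigraph)
    (e1 e2 e3 e4 : G.E)
    (h12ne : e1 ≠ e2) (h13ne : e1 ≠ e3) (h14ne : e1 ≠ e4)
    (h23ne : e2 ≠ e3) (h24ne : e2 ≠ e4) (h34ne : e3 ≠ e4)
    (hb1 : ¬ G.IsBridge e1) (hb2 : ¬ G.IsBridge e2)
    (hb3 : ¬ G.IsBridge e3) (hb4 : ¬ G.IsBridge e4)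
    (h12 : G.DiscPair e1 e2) (h23 : G.DiscPair e2 e3) (h34 : G.DiscPair e3 e4) :
    G.DiscPair e4 e1 := by
  obtain ⟨χ12, hχ12⟩ := FinMultigraph.exists_isCut_of_discPair hb1 hb2 h12
  obtain ⟨χ23, hχ23⟩ := FinMultigraph.exists_isCut_of_discPair hb2 hb3 h23
  obtain ⟨χ34, hχ34⟩ := FinMultigraph.exists_isCut_of_discPair hb3 hb4 h34
  have hcut := (hχ12.xor hχ23).xor hχ34
  rw [Set.pair_symmDiff_pair_symmDiff_pair h12ne h13ne h14ne h23ne h24ne h34ne] at hcut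
  exact hcut.not_connOff (Set.mem_insert e4 {e1})

/-- If `e1,e2,e3,e4` are distinct non-bridge edges of a connected graph
such that `{e1,e2}`, `{e2,e3}`, `{e3,e4}` are disconnecting pairs, then so is `{e4,e1}`. -/
theorem disconnecting_pair_transitive (G : FinMultigraph) (hG : G.Connected)
    (e1 e2 e3 e4 : G.E)
    (h12ne : e1 ≠ e2) (h13ne : e1 ≠ e3) (h14ne : e1 ≠ e4)
    (h23ne : e2 ≠ e3) (h24ne : e2 ≠ e4) (h34ne : e3 ≠ e4)
    (hb1 : ¬ G.IsBridge e1) (hb2 : ¬ G.IsBridge e2)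
    (hb3 : ¬ G.IsBridge e3) (hb4 : ¬ G.IsBridge e4)
    (h12 : G.DiscPair e1 e2) (h23 : G.DiscPair e2 e3) (h34 : G.DiscPair e3 e4) :
    G.DiscPair e4 e1 :=
  disconnecting_pair_transitive_general G e1 e2 e3 e4 h12ne h13ne h14ne h23ne h24ne h34ne hb1 hb2
    hb3 hb4 h12 h23 h34
end

section
/- The relation on non-bridge edges of a connected graph defined by 'e and f form a disconnecting pair or e = f' is an equivalence relation on the set of non-bridge edges. -/
/-!
A set of edges disconnects the graph exactly when it contains the cut `δ(A)` (`cutEdges A`) of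
a vertex set `A` with `∅ ≠ A ≠ V`. If `e` and `f` are not bridges, a disconnecting pair `{e, f}`
is therefore exactly such a cut, `δ(A) = {e, f}`. Cuts are closed under symmetric difference,
`δ(A ∆ B) = δ(A) ∆ δ(B)`, so from `δ(A) = {e, f}` and `δ(B) = {f, g}` we get a nonempty cut
`δ(A ∆ B) ⊆ {e, g}` when `e ≠ g`: hence `{e, g}` is a disconnecting pair.
-/

/-- A finite (multi)graph: finite vertex and edge types, each edge with an
unordered pair of endpoints. -/
structure MGraph where
  V : Type
  E : Type
  [fintV : Fintype V]
  [fintE : Fintype E]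
  ends : E → Sym2 V

namespace MGraph

/-- Adjacency in the graph obtained by deleting the edges in `S`. -/
def adjOff (G : MGraph) (S : Set G.E) (u v : G.V) : Prop :=
  ∃ e : G.E, e ∉ S ∧ G.ends e = s(u, v)

/-- The graph with the edges in `S` deleted is connected. -/
def connOff (G : MGraph) (S : Set G.E) : Prop :=
  ∀ u v : G.V, Relation.ReflTransGen (G.adjOff S) u v

/-- The graph is connected. -/
def Connected (G : MGraph) : Prop := G.connOff ∅

/-- An edge is a bridge if its removal disconnects the graph. -/
def IsBridge (G : MGraph) (e : G.E) : Prop := ¬ G.connOff {e}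

/-- A pair of edges is a disconnecting pair if removing both disconnects the graph. -/
def DiscPair (G : MGraph) (e f : G.E) : Prop := ¬ G.connOff {e, f}

/-- Number of connected components after deleting the edges in `S`. -/
noncomputable def numComponentsOff (G : MGraph) (S : Set G.E) : ℕ :=
  Nat.card (Quot (G.adjOff S))

end MGraph

open Relation

namespace MGraph

variable (G : MGraph)

def cutEdges (A : Set G.V) : Set G.E :=
  {e | (∃ x ∈ G.ends e, x ∈ A) ∧ ∃ y ∈ G.ends e, y ∉ A}

variable {G}

lemma mem_cutEdges_iff {A : Set G.V} {e : G.E} {x y : G.V} (h : G.ends e = s(x, y)) :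
    e ∈ G.cutEdges A ↔ ¬ (x ∈ A ↔ y ∈ A) := by
  simp only [cutEdges, Set.mem_ofPred_eq, h, Sym2.mem_iff, exists_eq_or_imp, exists_eq_left]
  tauto

lemma nonempty_of_mem_cutEdges {A : Set G.V} {e : G.E} (he : e ∈ G.cutEdges A) :
    A.Nonempty ∧ Aᶜ.Nonempty :=
  ⟨he.1.imp fun _ => And.right, he.2.imp fun _ => And.right⟩

lemma cutEdges_symmDiff (A B : Set G.V) :
    G.cutEdges (symmDiff A B) = symmDiff (G.cutEdges A) (G.cutEdges B) := by
  ext e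
  obtain ⟨x, y, hxy⟩ : ∃ x y, G.ends e = s(x, y) := Sym2.exists.1 ⟨_, rfl⟩
  simp only [Set.mem_symmDiff, mem_cutEdges_iff hxy]
  tauto

lemma mem_of_adjOff_of_cutEdges_subset {S : Set G.E} {A : Set G.V} (hA : G.cutEdges A ⊆ S)
    {x y : G.V} (hxy : G.adjOff S x y) (hx : x ∈ A) : y ∈ A := by
  obtain ⟨e, heS, he⟩ := hxy
  by_contra hy
  exact heS (hA ((mem_cutEdges_iff he).2 fun hxy => hy (hxy.1 hx)))

theorem not_connOff_iff_exists_cutEdges_subset {S : Set G.E} :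
    ¬ G.connOff S ↔ ∃ A : Set G.V, A.Nonempty ∧ Aᶜ.Nonempty ∧ G.cutEdges A ⊆ S := by
  constructor
  · intro hS
    obtain ⟨u, v, huv⟩ : ∃ u v, ¬ ReflTransGen (G.adjOff S) u v := by
      simpa [connOff] using hS
    refine ⟨{w | ReflTransGen (G.adjOff S) u w}, ⟨u, .refl⟩, ⟨v, huv⟩, ?_⟩
    rintro e ⟨⟨x, hxe, hx⟩, ⟨y, hye, hy⟩⟩
    by_contra heS
    have hne : x ≠ y := by rintro rfl; exact hy hx
    exact hy (hx.tail ⟨e, heS, (Sym2.mem_and_mem_iff hne).1 ⟨hxe, hye⟩⟩)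
  · rintro ⟨A, ⟨u, hu⟩, ⟨v, hv⟩, hA⟩ hS
    induction hS u v with
    | refl => exact hv hu
    | tail _ hstep ih => exact ih fun hb => hv (mem_of_adjOff_of_cutEdges_subset hA hstep hb)

lemma mem_cutEdges_of_subset_pair {A : Set G.V} {e f : G.E} (hf : ¬ G.IsBridge f)
    (hA : A.Nonempty) (hAc : Aᶜ.Nonempty) (hsub : G.cutEdges A ⊆ {e, f}) :
    e ∈ G.cutEdges A := by
  by_contra he
  refine hf (not_connOff_iff_exists_cutEdges_subset.2 ⟨A, hA, hAc, fun c hc => ?_⟩)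
  rcases hsub hc with rfl | rfl
  exacts [absurd hc he, rfl]

lemma DiscPair.exists_cutEdges_eq {e f : G.E} (h : G.DiscPair e f) (he : ¬ G.IsBridge e)
    (hf : ¬ G.IsBridge f) : ∃ A : Set G.V, G.cutEdges A = {e, f} := by
  obtain ⟨A, hA, hAc, hsub⟩ := not_connOff_iff_exists_cutEdges_subset.1 h
  refine ⟨A, hsub.antisymm (Set.insert_subset_iff.2 ⟨?_, Set.singleton_subset_iff.2 ?_⟩)⟩
  · exact mem_cutEdges_of_subset_pair hf hA hAc hsub
  · exact mem_cutEdges_of_subset_pair he hA hAc (Set.pair_comm e f ▸ hsub)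

lemma DiscPair.symm {e f : G.E} (h : G.DiscPair e f) : G.DiscPair f e := by
  rwa [DiscPair, Set.pair_comm]

lemma DiscPair.trans {e f g : G.E} (hef : G.DiscPair e f) (hfg : G.DiscPair f g)
    (he : ¬ G.IsBridge e) (hf : ¬ G.IsBridge f) (hg : ¬ G.IsBridge g) (heg : e ≠ g) :
    G.DiscPair e g := by
  obtain ⟨A, hA⟩ := hef.exists_cutEdges_eq he hf
  obtain ⟨B, hB⟩ := hfg.exists_cutEdges_eq hf hg
  have hcut : G.cutEdges (symmDiff A B) = symmDiff {e, f} {f, g} := by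
    rw [cutEdges_symmDiff, hA, hB]
  obtain ⟨c, hc⟩ : (G.cutEdges (symmDiff A B)).Nonempty := by
    rw [hcut]
    by_cases hef' : e = f
    · exact ⟨g, by simp [Set.mem_symmDiff, hef', Ne.symm (hef' ▸ heg)]⟩
    · exact ⟨e, by simp [Set.mem_symmDiff, hef', heg]⟩
  obtain ⟨hC, hCc⟩ := nonempty_of_mem_cutEdges hc
  refine not_connOff_iff_exists_cutEdges_subset.2 ⟨_, hC, hCc, ?_⟩
  rw [hcut]
  intro d
  simp only [Set.mem_symmDiff, Set.mem_insert_iff, Set.mem_singleton_iff]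
  tauto

end MGraph

theorem discPair_equivalence_general (G : MGraph) :
    Equivalence (fun e f : {e : G.E // ¬ G.IsBridge e} =>
      e = f ∨ G.DiscPair e.1 f.1) := by
  refine ⟨fun _ => Or.inl rfl, ?_, ?_⟩
  · rintro e f (rfl | h)
    exacts [Or.inl rfl, Or.inr h.symm]
  · rintro e f g (rfl | hef) (rfl | hfg)
    · exact Or.inl rfl
    · exact Or.inr hfg
    · exact Or.inr hef
    by_cases heg : e = g
    · exact Or.inl heg
    · exact Or.inr (hef.trans hfg e.2 f.2 g.2 fun h => heg (Subtype.ext h))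

/-- On the non-bridge edges of a connected graph, the relation
"`e = f` or `{e,f}` is a disconnecting pair" is an equivalence relation. -/
theorem discPair_equivalence (G : MGraph) (hG : G.Connected) :
    Equivalence (fun e f : {e : G.E // ¬ G.IsBridge e} =>
      e = f ∨ G.DiscPair e.1 f.1) :=
  discPair_equivalence_general G
end
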